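/- arXiv:2403.11883 — 4 statements merged into one kernel-verified Lean document; each statement's English description precedes it below -/
import Mathlib

section
/- The convex hull of a finite union of trajectories of a linear system, each terminating at a common equilibrium point, is control invariant: for any point ξ in the convex hull expressed as a convex combination ξ = Σ_{i,t} γ_t^i ξ_t^i of trajectory states, applying the input u = Σ_{i,t} γ_t^i u_t^i yields a successor state ξ⁺ = Ãξ + B̃u that again lies in the convex hull. -/
/- STATEMENT 0: The convex hull of a finite union of trajectories of a linear
system, each terminating at a common equilibrium point, is control invariant:
for any point ξ in the convex hull expressed as a convex combination
ξ = Σ_{i,t} γ_t^i ξ_t^i of trajectory states, applying the input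
u = Σ_{i,t} γ_t^i u_t^i yields a successor state ξ⁺ = Ãξ + B̃u that again
lies in the convex hull. -/
theorem safe_set_control_invariant
    {n m : ℕ} {ι : Type*} [Fintype ι]
    (A : (Fin n → ℝ) →ₗ[ℝ] (Fin n → ℝ))
    (B : (Fin m → ℝ) →ₗ[ℝ] (Fin n → ℝ))
    (T : ι → ℕ)
    (ξ : ι → ℕ → (Fin n → ℝ)) (u : ι → ℕ → (Fin m → ℝ))
    (ξF : Fin n → ℝ) (uF : Fin m → ℝ)
    -- dynamics along each trajectory
    (hdyn : ∀ i, ∀ t < T i, ξ i (t + 1) = A (ξ i t) + B (u i t))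
    -- common terminal state, equilibrium, and terminal input
    (hterm : ∀ i, ξ i (T i) = ξF)
    (hequil : ξF = A ξF + B uF)
    (huF : ∀ i, u i (T i) = uF)
    -- convex combination weights
    (γ : ι → ℕ → ℝ)
    (hγnn : ∀ i t, 0 ≤ γ i t)
    (hγsum : ∑ i, ∑ t ∈ Finset.range (T i + 1), γ i t = 1)
    (ξbar : Fin n → ℝ) (ubar : Fin m → ℝ)
    (hξbar : ξbar = ∑ i, ∑ t ∈ Finset.range (T i + 1), γ i t • ξ i t)
    (hubar : ubar = ∑ i, ∑ t ∈ Finset.range (T i + 1), γ i t • u i t) :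
    A ξbar + B ubar ∈
      convexHull ℝ {x : Fin n → ℝ | ∃ i, ∃ t ≤ T i, x = ξ i t} := by
  classical
  have key : A ξbar + B ubar =
      ∑ p ∈ Finset.univ.sigma (fun i => Finset.range (T i + 1)),
        γ p.1 p.2 • (A (ξ p.1 p.2) + B (u p.1 p.2)) := by
    simp only [hξbar, hubar, map_sum, map_smul, smul_add, Finset.sum_add_distrib,
      Finset.sum_sigma']
  rw [key]
  refine (convex_convexHull ℝ _).sum_mem (fun p _ => hγnn p.1 p.2) ?_ ?_
  · rw [← Finset.sum_sigma']; exact hγsum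
  · rintro ⟨i, t⟩ hp
    simp only [Finset.mem_sigma, Finset.mem_range, Nat.lt_succ_iff] at hp
    apply subset_convexHull
    rcases lt_or_eq_of_le hp.2 with h | h
    · exact ⟨i, t + 1, h, (hdyn i t h).symm⟩
    · refine ⟨i, T i, le_refl _, ?_⟩
      rw [h, hterm i, huF i, ← hequil]
end

section
/- Let P(ξ) be the minimum over convex-combination weights γ ≥ 0 summing to 1 with Σ γ_t^i ξ_t^i = ξ of Σ γ_t^i J^i(ξ_t^i), where J^i(ξ_t^i) = Σ_{k=t}^{T^i−1} h(u_k^i, y_k^i) is the cost-to-go along trajectory i (with J^i(ξ_{T^i}^i) = 0). Then for any ξ in the convex hull of trajectory states, the successor ξ⁺ = Ãξ + B̃ū under the convex-combination input ū = Σ γ*_t^i u_t^i (γ* a minimizer) satisfies P(ξ⁺) ≤ P(ξ) − h(ū, ȳ), where ȳ = C̃ξ + D̃ū and h is convex (here h(u,y) = ‖u−u^F‖²_R + ‖y−y^F‖²_Q with R ≻ 0, Q ⪰ 0). -/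
/-!
Shift every weight of the optimal combination γ* one step forward along its trajectory, the
weight on the terminal state staying put since ξ^F is an equilibrium of zero stage cost. By
linearity of the dynamics the shifted weights represent ξ⁺ = Ãξ + B̃ū, and their cost is
P(ξ) − Σ γ*_t^i h(u_t^i, y_t^i), so P(ξ⁺) is at most that. Jensen's inequality for the convex
stage cost bounds the subtracted sum below by h(ū, ȳ).
-/

open Matrix Finset

theorem Matrix.PosSemidef.convexOn_dotProduct_mulVec {k : Type*} [Fintype k]
    {M : Matrix k k ℝ} (hM : M.PosSemidef) :
    ConvexOn ℝ Set.univ fun x : k → ℝ ↦ x ⬝ᵥ M *ᵥ x := by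
  refine ⟨convex_univ, fun x _ y _ a b ha hb hab ↦ ?_⟩
  have hxy : 0 ≤ (x - y) ⬝ᵥ M *ᵥ (x - y) := by
    simpa using hM.dotProduct_mulVec_nonneg (x - y)
  obtain rfl : b = 1 - a := by linarith
  simp only [smul_eq_mul, mulVec_add, mulVec_smul, mulVec_sub, dotProduct_add, add_dotProduct,
    dotProduct_sub, sub_dotProduct, dotProduct_smul, smul_dotProduct] at hxy ⊢
  nlinarith [mul_nonneg ha hb]

theorem Matrix.PosSemidef.convexOn_dotProduct_mulVec_sub {k E : Type*} [Fintype k]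
    [AddCommGroup E] [Module ℝ E] {M : Matrix k k ℝ} (hM : M.PosSemidef)
    (L : E →ₗ[ℝ] k → ℝ) (c : k → ℝ) :
    ConvexOn ℝ Set.univ fun x ↦ (L x - c) ⬝ᵥ M *ᵥ (L x - c) := by
  have := hM.convexOn_dotProduct_mulVec.comp_affineMap (L.toAffineMap - AffineMap.const ℝ E c)
  rwa [Set.preimage_univ] at this

theorem ConvexOn.map_sum_sum_le {ι κ E : Type*} [Fintype ι] [AddCommGroup E] [Module ℝ E]
    {s : Set E} {f : E → ℝ} (hf : ConvexOn ℝ s f) {t : ι → Finset κ} {w : ι → κ → ℝ}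
    {z : ι → κ → E} (h₀ : ∀ i, ∀ j ∈ t i, 0 ≤ w i j) (h₁ : ∑ i, ∑ j ∈ t i, w i j = 1)
    (hmem : ∀ i, ∀ j ∈ t i, z i j ∈ s) :
    f (∑ i, ∑ j ∈ t i, w i j • z i j) ≤ ∑ i, ∑ j ∈ t i, w i j * f (z i j) := by
  have := hf.map_sum_le (t := univ.sigma t) (w := fun q ↦ w q.1 q.2) (p := fun q ↦ z q.1 q.2)
    (fun q hq ↦ h₀ q.1 q.2 (mem_sigma.1 hq).2) (by rwa [sum_sigma])
    (fun q hq ↦ hmem q.1 q.2 (mem_sigma.1 hq).2)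
  simpa only [sum_sigma, smul_eq_mul] using this

section StageCost

variable {k l : Type*} [Fintype k] [Fintype l] {R : Matrix k k ℝ} {Q : Matrix l l ℝ}

def stageCost (R : Matrix k k ℝ) (Q : Matrix l l ℝ) (uF : k → ℝ) (yF : l → ℝ) (v : k → ℝ)
    (w : l → ℝ) : ℝ :=
  (v - uF) ⬝ᵥ R *ᵥ (v - uF) + (w - yF) ⬝ᵥ Q *ᵥ (w - yF)

@[simp]
theorem stageCost_self (uF : k → ℝ) (yF : l → ℝ) : stageCost R Q uF yF uF yF = 0 := by
  simp [stageCost]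

theorem stageCost_nonneg (hR : R.PosSemidef) (hQ : Q.PosSemidef) (uF : k → ℝ) (yF : l → ℝ)
    (v : k → ℝ) (w : l → ℝ) : 0 ≤ stageCost R Q uF yF v w :=
  add_nonneg (by simpa using hR.dotProduct_mulVec_nonneg (v - uF))
    (by simpa using hQ.dotProduct_mulVec_nonneg (w - yF))

variable {E : Type*} [AddCommGroup E] [Module ℝ E]

theorem convexOn_stageCost_output (hR : R.PosSemidef) (hQ : Q.PosSemidef)
    (C : E →ₗ[ℝ] l → ℝ) (D : (k → ℝ) →ₗ[ℝ] l → ℝ) (uF : k → ℝ) (yF : l → ℝ) :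
    ConvexOn ℝ Set.univ fun q : E × (k → ℝ) ↦ stageCost R Q uF yF q.2 (C q.1 + D q.2) := by
  simpa only [stageCost, Pi.add_def, LinearMap.snd_apply, LinearMap.coprod_apply] using
    (hR.convexOn_dotProduct_mulVec_sub (LinearMap.snd ℝ _ _) uF).add
      (hQ.convexOn_dotProduct_mulVec_sub (C.coprod D) yF)

theorem stageCost_output_sum_le {ι κ : Type*} [Fintype ι] (hR : R.PosSemidef)
    (hQ : Q.PosSemidef) (C : E →ₗ[ℝ] l → ℝ) (D : (k → ℝ) →ₗ[ℝ] l → ℝ) (uF : k → ℝ) (yF : l → ℝ)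
    {t : ι → Finset κ} {γ : ι → κ → ℝ} (h₀ : ∀ i, ∀ j ∈ t i, 0 ≤ γ i j)
    (h₁ : ∑ i, ∑ j ∈ t i, γ i j = 1) (ξ : ι → κ → E) (u : ι → κ → k → ℝ) :
    stageCost R Q uF yF (∑ i, ∑ j ∈ t i, γ i j • u i j)
        (C (∑ i, ∑ j ∈ t i, γ i j • ξ i j) + D (∑ i, ∑ j ∈ t i, γ i j • u i j)) ≤
      ∑ i, ∑ j ∈ t i, γ i j * stageCost R Q uF yF (u i j) (C (ξ i j) + D (u i j)) := by
  have := (convexOn_stageCost_output hR hQ C D uF yF).map_sum_sum_le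
    (z := fun i j ↦ (ξ i j, u i j)) h₀ h₁ fun _ _ _ ↦ Set.mem_univ _
  simpa only [Prod.fst_sum, Prod.snd_sum, Prod.smul_mk] using this

end StageCost

theorem Finset.sum_fiberwise_smul_of_maps_to {ι κ R M : Type*} [Semiring R] [AddCommMonoid M]
    [Module R M] [DecidableEq κ] {s : Finset ι} {t : Finset κ} {g : ι → κ}
    (h : ∀ i ∈ s, g i ∈ t) (w : ι → R) (f : κ → M) :
    ∑ j ∈ t, (∑ i ∈ s with g i = j, w i) • f j = ∑ i ∈ s, w i • f (g i) := by
  calc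
    _ = ∑ j ∈ t, ∑ i ∈ s with g i = j, w i • f (g i) :=
        sum_congr rfl fun j _ ↦ by
          rw [sum_smul]; exact sum_congr rfl fun i hi ↦ by rw [(mem_filter.1 hi).2]
    _ = _ := sum_fiberwise_of_maps_to h _

def shiftWeights (T : ℕ) (γ : ℕ → ℝ) (t : ℕ) : ℝ :=
  ∑ s ∈ range (T + 1) with min (s + 1) T = t, γ s

theorem shiftWeights_nonneg {T : ℕ} {γ : ℕ → ℝ} (hγ : ∀ t, 0 ≤ γ t) (t : ℕ) :
    0 ≤ shiftWeights T γ t :=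
  sum_nonneg fun s _ ↦ hγ s

theorem sum_shiftWeights_smul {M : Type*} [AddCommMonoid M] [Module ℝ M] (T : ℕ) (γ : ℕ → ℝ)
    (f : ℕ → M) :
    ∑ t ∈ range (T + 1), shiftWeights T γ t • f t = ∑ s ∈ range (T + 1), γ s • f (min (s + 1) T) :=
  sum_fiberwise_smul_of_maps_to (fun _ _ ↦ mem_range.2 (Nat.lt_succ_of_le (min_le_right _ _))) _ _

theorem sum_shiftWeights (T : ℕ) (γ : ℕ → ℝ) :
    ∑ t ∈ range (T + 1), shiftWeights T γ t = ∑ s ∈ range (T + 1), γ s := by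
  simpa using sum_shiftWeights_smul T γ fun _ ↦ (1 : ℝ)

section Trajectory

variable {E U : Type*} {T : ℕ}

theorem trajectory_min_succ [Add E] {A : E → E} {B : U → E} {ξ : ℕ → E} {u : ℕ → U}
    {ξF : E} {uF : U} (hdyn : ∀ t < T, ξ (t + 1) = A (ξ t) + B (u t)) (hterm : ξ T = ξF)
    (huF : u T = uF) (hequil : ξF = A ξF + B uF) {t : ℕ} (ht : t ≤ T) :
    ξ (min (t + 1) T) = A (ξ t) + B (u t) := by
  rcases ht.lt_or_eq with ht | rfl
  · rw [min_eq_left ht, hdyn t ht]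
  · rw [min_eq_right t.le_succ, hterm, huF, ← hequil]

theorem costToGo_min_succ {c J : ℕ → ℝ} (hJ : ∀ t ≤ T, J t = ∑ k ∈ Ico t T, c k) (hc : c T = 0)
    {t : ℕ} (ht : t ≤ T) :
    J (min (t + 1) T) = J t - c t := by
  rcases ht.lt_or_eq with ht | rfl
  · rw [min_eq_left ht, hJ t ht.le, hJ (t + 1) ht, sum_eq_sum_Ico_succ_bot ht]
    ring
  · rw [min_eq_right t.le_succ, hc, sub_zero]

theorem sum_shiftWeights_smul_trajectory [AddCommMonoid E] [Module ℝ E]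
    {A : E → E} {B : U → E} {ξ : ℕ → E} {u : ℕ → U} {ξF : E} {uF : U}
    (hdyn : ∀ t < T, ξ (t + 1) = A (ξ t) + B (u t)) (hterm : ξ T = ξF) (huF : u T = uF)
    (hequil : ξF = A ξF + B uF) (γ : ℕ → ℝ) :
    ∑ t ∈ range (T + 1), shiftWeights T γ t • ξ t =
      ∑ s ∈ range (T + 1), γ s • (A (ξ s) + B (u s)) := by
  rw [sum_shiftWeights_smul]
  refine sum_congr rfl fun s hs ↦ ?_
  rw [trajectory_min_succ hdyn hterm huF hequil (Nat.lt_succ_iff.1 (mem_range.1 hs))]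

theorem sum_shiftWeights_mul_costToGo {c J : ℕ → ℝ}
    (hJ : ∀ t ≤ T, J t = ∑ k ∈ Ico t T, c k) (hc : c T = 0) (γ : ℕ → ℝ) :
    ∑ t ∈ range (T + 1), shiftWeights T γ t * J t =
      ∑ s ∈ range (T + 1), γ s * J s - ∑ s ∈ range (T + 1), γ s * c s := by
  rw [← sum_sub_distrib]
  simp_rw [← smul_eq_mul, sum_shiftWeights_smul, smul_eq_mul, ← mul_sub]
  refine sum_congr rfl fun s hs ↦ ?_
  rw [costToGo_min_succ hJ hc (Nat.lt_succ_iff.1 (mem_range.1 hs))]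

end Trajectory

def feasibleCosts {ι E : Type*} [Fintype ι] [AddCommMonoid E] [Module ℝ E] (T : ι → ℕ)
    (ξ : ι → ℕ → E) (J : ι → ℕ → ℝ) (x : E) : Set ℝ :=
  {c : ℝ | ∃ γ : ι → ℕ → ℝ,
    (∀ i t, 0 ≤ γ i t) ∧
    (∑ i, ∑ t ∈ range (T i + 1), γ i t = 1) ∧
    (∑ i, ∑ t ∈ range (T i + 1), γ i t • ξ i t = x) ∧
    c = ∑ i, ∑ t ∈ range (T i + 1), γ i t * J i t}

theorem sInf_feasibleCosts_le {ι E : Type*} [Fintype ι] [AddCommMonoid E] [Module ℝ E]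
    {T : ι → ℕ} {ξ : ι → ℕ → E} {J : ι → ℕ → ℝ} (hJ : ∀ i, ∀ t ≤ T i, 0 ≤ J i t)
    {x : E} {γ : ι → ℕ → ℝ} (hγ : ∀ i t, 0 ≤ γ i t)
    (hsum : ∑ i, ∑ t ∈ range (T i + 1), γ i t = 1)
    (hrep : ∑ i, ∑ t ∈ range (T i + 1), γ i t • ξ i t = x) :
    sInf (feasibleCosts T ξ J x) ≤ ∑ i, ∑ t ∈ range (T i + 1), γ i t * J i t := by
  refine csInf_le ⟨0, ?_⟩ ⟨γ, hγ, hsum, hrep, rfl⟩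
  rintro _ ⟨γ, hγ, -, -, rfl⟩
  exact sum_nonneg fun i _ ↦ sum_nonneg fun t ht ↦
    mul_nonneg (hγ i t) (hJ i t (Nat.lt_succ_iff.1 (mem_range.1 ht)))

theorem terminal_cost_decrease
    {n m p : ℕ} {ι : Type*} [Fintype ι]
    (A : (Fin n → ℝ) →ₗ[ℝ] (Fin n → ℝ))
    (B : (Fin m → ℝ) →ₗ[ℝ] (Fin n → ℝ))
    (C : (Fin n → ℝ) →ₗ[ℝ] (Fin p → ℝ))
    (D : (Fin m → ℝ) →ₗ[ℝ] (Fin p → ℝ))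
    (R : Matrix (Fin m) (Fin m) ℝ) (Q : Matrix (Fin p) (Fin p) ℝ)
    (hR : R.PosDef) (hQ : Q.PosSemidef)
    (uF : Fin m → ℝ) (yF : Fin p → ℝ) (ξF : Fin n → ℝ)
    -- the stage cost
    (h : (Fin m → ℝ) → (Fin p → ℝ) → ℝ)
    (hdef : ∀ u y, h u y = (u - uF) ⬝ᵥ R.mulVec (u - uF)
                          + (y - yF) ⬝ᵥ Q.mulVec (y - yF))
    -- trajectories
    (T : ι → ℕ)
    (ξ : ι → ℕ → (Fin n → ℝ)) (u : ι → ℕ → (Fin m → ℝ))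
    (y : ι → ℕ → (Fin p → ℝ))
    (hdyn : ∀ i, ∀ t < T i, ξ i (t + 1) = A (ξ i t) + B (u i t))
    (hout : ∀ i, ∀ t < T i, y i t = C (ξ i t) + D (u i t))
    (hterm : ∀ i, ξ i (T i) = ξF)
    (hequil : ξF = A ξF + B uF) (hyF : yF = C ξF + D uF)
    (huF : ∀ i, u i (T i) = uF)
    -- cost-to-go along each trajectory
    (J : ι → ℕ → ℝ)
    (hJ : ∀ i, ∀ t ≤ T i, J i t = ∑ k ∈ Finset.Ico t (T i), h (u i k) (y i k))
    -- the value function P of the linear program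
    (P : (Fin n → ℝ) → ℝ)
    (hP : ∀ x, P x = sInf {c : ℝ | ∃ γ : ι → ℕ → ℝ,
        (∀ i t, 0 ≤ γ i t) ∧
        (∑ i, ∑ t ∈ Finset.range (T i + 1), γ i t = 1) ∧
        (∑ i, ∑ t ∈ Finset.range (T i + 1), γ i t • ξ i t = x) ∧
        c = ∑ i, ∑ t ∈ Finset.range (T i + 1), γ i t * J i t})
    -- γ* is a minimizer for the point ξbar
    (γs : ι → ℕ → ℝ) (ξbar : Fin n → ℝ)
    (hγnn : ∀ i t, 0 ≤ γs i t)
    (hγsum : ∑ i, ∑ t ∈ Finset.range (T i + 1), γs i t = 1)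
    (hγrep : ∑ i, ∑ t ∈ Finset.range (T i + 1), γs i t • ξ i t = ξbar)
    (hopt : P ξbar = ∑ i, ∑ t ∈ Finset.range (T i + 1), γs i t * J i t)
    (ubar : Fin m → ℝ) (ybar : Fin p → ℝ)
    (hubar : ubar = ∑ i, ∑ t ∈ Finset.range (T i + 1), γs i t • u i t)
    (hybar : ybar = C ξbar + D ubar) :
    P (A ξbar + B ubar) ≤ P ξbar - h ubar ybar := by
  obtain rfl : h = stageCost R Q uF yF := funext₂ hdef
  set c : ι → ℕ → ℝ := fun i t ↦ stageCost R Q uF yF (u i t) (C (ξ i t) + D (u i t))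
  have hc_term : ∀ i, c i (T i) = 0 := fun i ↦ by simp [c, hterm, huF, ← hyF]
  have hJc : ∀ i, ∀ t ≤ T i, J i t = ∑ k ∈ Ico t (T i), c i k := fun i t ht ↦
    (hJ i t ht).trans (sum_congr rfl fun k hk ↦ by rw [hout i k (mem_Ico.1 hk).2])
  have hJ_nonneg : ∀ i, ∀ t ≤ T i, 0 ≤ J i t := fun i t ht ↦
    (hJ i t ht).symm ▸ sum_nonneg fun _ _ ↦ stageCost_nonneg hR.posSemidef hQ _ _ _ _
  set γ' : ι → ℕ → ℝ := fun i ↦ shiftWeights (T i) (γs i)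
  have hshift_sum : ∑ i, ∑ t ∈ range (T i + 1), γ' i t = 1 := by
    simpa only [γ', sum_shiftWeights] using hγsum
  have hshift_rep : ∑ i, ∑ t ∈ range (T i + 1), γ' i t • ξ i t = A ξbar + B ubar := by
    simp only [γ', sum_shiftWeights_smul_trajectory (hdyn _) (hterm _) (huF _) hequil, smul_add,
      sum_add_distrib, ← map_smul, ← map_sum, hγrep, hubar]
  have hshift_cost : ∑ i, ∑ t ∈ range (T i + 1), γ' i t * J i t =
      P ξbar - ∑ i, ∑ t ∈ range (T i + 1), γs i t * c i t := by
    simp only [γ', sum_shiftWeights_mul_costToGo (hJc _) (hc_term _), sum_sub_distrib, hopt]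
  have hjensen :=
    stageCost_output_sum_le hR.posSemidef hQ C D uF yF (fun i t _ ↦ hγnn i t) hγsum ξ u
  rw [hγrep, ← hubar, ← hybar] at hjensen
  have hγ'_nonneg : ∀ i t, 0 ≤ γ' i t := fun i ↦ shiftWeights_nonneg (hγnn i)
  calc _ ≤ ∑ i, ∑ t ∈ range (T i + 1), γ' i t * J i t :=
        (hP _).trans_le (sInf_feasibleCosts_le hJ_nonneg hγ'_nonneg hshift_sum hshift_rep)
    _ ≤ _ := by linarith
end

section
/- The subspace of length-L input-output trajectories of an observable LTI system with n states and m inputs has dimension exactly mL + n, provided L ≥ the observability index (lag) of the system. -/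
noncomputable section

/-- projection onto the t-th input (0 if t ≥ L) -/
def uproj {n m L : ℕ} (t : ℕ) :
    ((Fin n → ℝ) × (Fin L → Fin m → ℝ)) →ₗ[ℝ] (Fin m → ℝ) :=
  if h : t < L then (LinearMap.proj (⟨t, h⟩ : Fin L)) ∘ₗ LinearMap.snd ℝ _ _ else 0

/-- state at time t as a linear map of (x0, u) -/
def stmap {n m L : ℕ} (A : (Fin n → ℝ) →ₗ[ℝ] (Fin n → ℝ))
    (B : (Fin m → ℝ) →ₗ[ℝ] (Fin n → ℝ)) :
    ℕ → ((Fin n → ℝ) × (Fin L → Fin m → ℝ)) →ₗ[ℝ] (Fin n → ℝ)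
  | 0 => LinearMap.fst ℝ _ _
  | t+1 => A ∘ₗ stmap A B t + B ∘ₗ uproj t

lemma stmap_zero_input {n m L : ℕ} (A : (Fin n → ℝ) →ₗ[ℝ] (Fin n → ℝ))
    (B : (Fin m → ℝ) →ₗ[ℝ] (Fin n → ℝ)) (x0 : Fin n → ℝ) (t : ℕ) :
    stmap (L := L) A B t (x0, 0) = (A ^ t) x0 := by
  induction t with
  | zero => simp [stmap]
  | succ t ih =>
    have hu : uproj (n := n) (m := m) (L := L) t (x0, (0 : Fin L → Fin m → ℝ)) = 0 := by
      unfold uproj; split <;> simp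
    simp only [stmap, LinearMap.add_apply, LinearMap.comp_apply, ih, hu, map_zero, add_zero]
    rw [← Module.End.mul_apply, ← pow_succ']

/- STATEMENT 8: The subspace of length-L input-output trajectories of an
observable LTI system with n states and m inputs has dimension exactly
mL + n, provided L ≥ ℓ, where ℓ is the lag (observability index): the
depth-ℓ observability matrix is injective. -/
theorem trajectory_space_dimension
    {n m q : ℕ} {L ℓ : ℕ} (hℓL : ℓ ≤ L)
    (A : (Fin n → ℝ) →ₗ[ℝ] (Fin n → ℝ))
    (B : (Fin m → ℝ) →ₗ[ℝ] (Fin n → ℝ))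
    (C : (Fin n → ℝ) →ₗ[ℝ] (Fin q → ℝ))
    (D : (Fin m → ℝ) →ₗ[ℝ] (Fin q → ℝ))
    -- ℓ is (an upper bound on) the lag: depth-ℓ observability map injective
    (hlag : ∀ x : Fin n → ℝ, (∀ t < ℓ, C ((A ^ t) x) = 0) → x = 0) :
    Module.finrank ℝ (Submodule.span ℝ
      {w : (Fin L → Fin m → ℝ) × (Fin L → Fin q → ℝ) |
        ∃ x : ℕ → Fin n → ℝ,
          (∀ s : Fin L, x ((s : ℕ) + 1) = A (x s) + B (w.1 s)) ∧
          (∀ s : Fin L, w.2 s = C (x s) + D (w.1 s))}) = m * L + n := by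
  set Φ : ((Fin n → ℝ) × (Fin L → Fin m → ℝ)) →ₗ[ℝ]
      ((Fin L → Fin m → ℝ) × (Fin L → Fin q → ℝ)) :=
    LinearMap.prod (LinearMap.snd ℝ _ _)
      (LinearMap.pi fun s : Fin L => C ∘ₗ stmap A B (s : ℕ) + D ∘ₗ uproj (s : ℕ)) with hΦ
  have hset : {w : (Fin L → Fin m → ℝ) × (Fin L → Fin q → ℝ) |
        ∃ x : ℕ → Fin n → ℝ,
          (∀ s : Fin L, x ((s : ℕ) + 1) = A (x s) + B (w.1 s)) ∧
          (∀ s : Fin L, w.2 s = C (x s) + D (w.1 s))} = Set.range Φ := by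
    ext w
    constructor
    · rintro ⟨x, hx, hy⟩
      refine ⟨(x 0, w.1), ?_⟩
      have hst : ∀ t : ℕ, t < L → stmap A B t (x 0, w.1) = x t := by
        intro t
        induction t with
        | zero => intro _; simp [stmap]
        | succ t ih =>
          intro ht
          have ht' : t < L := Nat.lt_of_succ_lt ht
          have : uproj (n := n) t (x 0, w.1) = w.1 ⟨t, ht'⟩ := by
            simp [uproj, ht']
          rw [hx ⟨t, ht'⟩] at *
          simp [stmap, ih ht', this]
      have h2 : (LinearMap.pi fun s : Fin L =>
          C ∘ₗ stmap A B (s : ℕ) + D ∘ₗ uproj (s : ℕ)) (x 0, w.1) = w.2 := by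
        funext s
        have hu : uproj (n := n) (s : ℕ) (x 0, w.1) = w.1 s := by
          simp [uproj, s.isLt]
        simp [LinearMap.pi_apply, hst s s.isLt, hu, hy s]
      simp [hΦ, LinearMap.prod_apply, h2, Prod.ext_iff]
    · rintro ⟨⟨x0, u⟩, rfl⟩
      refine ⟨fun t => stmap A B t (x0, u), ?_, ?_⟩
      · intro s
        have hu : uproj (n := n) (s : ℕ) (x0, u) = u s := by
          simp [uproj, s.isLt]
        simp [hΦ, stmap, hu]
      · intro s
        have hu : uproj (n := n) (s : ℕ) (x0, u) = u s := by
          simp [uproj, s.isLt]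
        simp [hΦ, LinearMap.pi_apply, hu]
  have hinj : Function.Injective Φ := by
    rw [← LinearMap.ker_eq_bot]
    rw [Submodule.eq_bot_iff]
    rintro ⟨x0, u⟩ hmem
    have h := LinearMap.mem_ker.mp hmem
    have hu : u = 0 := congrArg Prod.fst h
    subst hu
    have hy : ∀ s : Fin L, C ((A ^ (s : ℕ)) x0) = 0 := by
      intro s
      have := congrFun (congrArg Prod.snd h) s
      have hup : uproj (n := n) (m := m) (L := L) (s : ℕ)
          (x0, (0 : Fin L → Fin m → ℝ)) = 0 := by
        unfold uproj; split <;> simp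
      simpa [hΦ, LinearMap.pi_apply, stmap_zero_input, hup] using this
    have hx0 : x0 = 0 := hlag x0 (fun t ht => by
      have htL : t < L := lt_of_lt_of_le ht hℓL
      simpa using hy ⟨t, htL⟩)
    simp [hx0, Prod.ext_iff]
  rw [hset, ← LinearMap.coe_range, Submodule.span_eq,
    LinearMap.finrank_range_of_inj hinj]
  simp [Module.finrank_prod, Module.finrank_pi, Module.finrank_pi_fintype]
  ring
end
end

section
/- If T_ini ≥ ℓ (the lag of the system), then for any fixed past input-output data (u_ini, y_ini) of length T_ini consistent with the system and any future input sequence u of length N, the future output sequence y such that (col(u_ini, u), col(y_ini, y)) is a trajectory of the system is uniquely determined. -/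
/- STATEMENT 9: If T_ini ≥ ℓ (the lag), then for fixed past input-output
data (u_ini, y_ini) of length T_ini consistent with the system and any
future input sequence of length N, the future output sequence is uniquely
determined: two trajectories sharing the same input sequence and the same
first T_ini outputs have identical outputs over the whole horizon. -/
theorem future_output_unique
    {n m q : ℕ} {Tini N ℓ : ℕ} (hTini : ℓ ≤ Tini)
    (A : (Fin n → ℝ) →ₗ[ℝ] (Fin n → ℝ))
    (B : (Fin m → ℝ) →ₗ[ℝ] (Fin n → ℝ))
    (C : (Fin n → ℝ) →ₗ[ℝ] (Fin q → ℝ))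
    (D : (Fin m → ℝ) →ₗ[ℝ] (Fin q → ℝ))
    -- ℓ is the lag: depth-ℓ observability map injective
    (hlag : ∀ x : Fin n → ℝ, (∀ t < ℓ, C ((A ^ t) x) = 0) → x = 0)
    -- common input sequence, two candidate state/output trajectories
    (u : ℕ → Fin m → ℝ)
    (x₁ x₂ : ℕ → Fin n → ℝ) (y₁ y₂ : ℕ → Fin q → ℝ)
    (hdyn₁ : ∀ t < Tini + N, x₁ (t + 1) = A (x₁ t) + B (u t))
    (hdyn₂ : ∀ t < Tini + N, x₂ (t + 1) = A (x₂ t) + B (u t))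
    (hout₁ : ∀ t < Tini + N, y₁ t = C (x₁ t) + D (u t))
    (hout₂ : ∀ t < Tini + N, y₂ t = C (x₂ t) + D (u t))
    -- same past outputs
    (hpast : ∀ t < Tini, y₁ t = y₂ t) :
    ∀ t < Tini + N, y₁ t = y₂ t := by
  set d : ℕ → Fin n → ℝ := fun t => x₁ t - x₂ t with hd
  have hdstep : ∀ t < Tini + N, d (t + 1) = A (d t) := by
    intro t ht
    simp only [hd, hdyn₁ t ht, hdyn₂ t ht, map_sub]
    abel
  have hdt : ∀ t ≤ Tini + N, d t = (A ^ t) (d 0) := by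
    intro t ht
    induction t with
    | zero => simp
    | succ k ih =>
      have hk : k < Tini + N := Nat.lt_of_succ_le ht
      rw [hdstep k hk, ih (le_of_lt hk), pow_succ']
      simp [Module.End.mul_apply]
  have hydiff : ∀ t < Tini + N, y₁ t - y₂ t = C (d t) := by
    intro t ht
    simp only [hd, hout₁ t ht, hout₂ t ht, map_sub]
    abel
  have hd0 : d 0 = 0 := by
    apply hlag
    intro t ht
    have ht' : t < Tini + N := lt_of_lt_of_le (lt_of_lt_of_le ht hTini) (Nat.le_add_right _ _)
    have h := hydiff t ht'
    rw [hpast t (lt_of_lt_of_le ht hTini), sub_self] at h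
    rw [← hdt t (le_of_lt ht'), ← h]
  intro t ht
  have h := hydiff t ht
  rw [hdt t (le_of_lt ht), hd0, map_zero, map_zero] at h
  exact sub_eq_zero.mp h
end
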